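/- (Every atom of S⁰ is covered by NQUEENS.) For every atom A ∈ S⁰ there is a ground instance A ← B₁, …, B_k (k ∈ {0,1,2}) of one of the clauses (1)–(4) of NQUEENS whose head is A and whose body atoms B₁, …, B_k all belong to S⁰. -/
import Mathlib


/-- Ground terms of the n-queens program. -/
inductive Term : Type where
  | zero : Term
  | succ : Term → Term
  | nil  : Term
  | cons : Term → Term → Term

/-- The numeral `⌜n⌝`: `succ` applied `n` times to `zero`. -/
def numeral : ℕ → Term
  | 0 => Term.zero
  | n + 1 => Term.succ (numeral n)

/-- `NthMember k e t`: `e` is the `k`-th member (`k ≥ 1`) of the term `t`. -/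
inductive NthMember : ℕ → Term → Term → Prop where
  | head (e t' : Term) : NthMember 1 e (Term.cons e t')
  | tail {k : ℕ} {e t' : Term} (e₁ : Term) :
      NthMember k e t' → NthMember (k + 1) e (Term.cons e₁ t')

/-- `e` is a member of `t`. -/
def IsMember (e t : Term) : Prop := ∃ k : ℕ, 1 ≤ k ∧ NthMember k e t

/-- `t` is a list of length `n`. -/
inductive ListOfLength : ℕ → Term → Prop where
  | nil : ListOfLength 0 Term.nil
  | cons {n : ℕ} {t : Term} (e : Term) :
      ListOfLength n t → ListOfLength (n + 1) (Term.cons e t)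

/-- `t` is a list (of some length). -/
def IsList (t : Term) : Prop := ∃ n : ℕ, ListOfLength n t

/-- `t` is a list of pairwise distinct members. -/
def DistinctList (t : Term) : Prop :=
  IsList t ∧
  ∀ (k k' : ℕ) (e e' : Term),
    NthMember k e t → NthMember k' e' t → k ≠ k' → e ≠ e'

/-- The triple `(cs, us, ds)` is correct up to `m` w.r.t. `i`
(`0 ≤ m ≤ i`).  The up-diagonal number of queen `j` sitting at the `k`-th
column is the integer `k + j - i`, the down-diagonal number is `k + i - j`. -/
def CorrectUpTo (m i : ℕ) (cs us ds : Term) : Prop :=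
  m ≤ i ∧
  DistinctList cs ∧
  (∀ j : ℕ, 1 ≤ j → j ≤ m → IsMember (numeral j) cs) ∧
  -- the up-diagonal numbers of 1,…,m are pairwise distinct
  (∀ j j' k k' : ℕ, 1 ≤ j → j ≤ m → 1 ≤ j' → j' ≤ m → j ≠ j' →
    NthMember k (numeral j) cs → NthMember k' (numeral j') cs →
    (k : ℤ) + j - i ≠ (k' : ℤ) + j' - i) ∧
  -- the down-diagonal numbers of 1,…,m are pairwise distinct
  (∀ j j' k k' : ℕ, 1 ≤ j → j ≤ m → 1 ≤ j' → j' ≤ m → j ≠ j' →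
    NthMember k (numeral j) cs → NthMember k' (numeral j') cs →
    (k : ℤ) + i - j ≠ (k' : ℤ) + i - j') ∧
  -- positive up-diagonal numbers are recorded in us
  (∀ j k l : ℕ, 1 ≤ j → j ≤ m → NthMember k (numeral j) cs →
    (l : ℤ) = (k : ℤ) + j - i → 0 < l → NthMember l (numeral j) us) ∧
  -- positive down-diagonal numbers are recorded in ds
  (∀ j k l : ℕ, 1 ≤ j → j ≤ m → NthMember k (numeral j) cs →
    (l : ℤ) = (k : ℤ) + i - j → 0 < l → NthMember l (numeral j) ds)

/-- Ground atoms. -/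
inductive Atom : Type where
  | pq  : Term → Term → Term → Term → Atom
  | pqs : Term → Term → Term → Term → Atom

/-- `S` is an (Herbrand) model of the ground definite program `P`:
for every clause `(H, B) ∈ P` whose body atoms all lie in `S`, also `H ∈ S`. -/
def IsModel {A : Type} (P : Set (A × List A)) (S : Set A) : Prop :=
  ∀ (H : A) (B : List A), (H, B) ∈ P → (∀ b ∈ B, b ∈ S) → H ∈ S

/-- The least Herbrand model of `P` (the least set of atoms closed
under all the clauses of `P`). -/
def LeastModel {A : Type} (P : Set (A × List A)) : Set A :=
  ⋂₀ { S : Set A | IsModel P S }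

/-- The ground instances of the four clauses of the program NQUEENS. -/
inductive NQClause : Atom × List Atom → Prop where
  | c1 (x y z : Term) :
      NQClause (Atom.pqs Term.zero x y z, [])
  | c2 (i cs us ds u d : Term) :
      NQClause (Atom.pqs (Term.succ i) cs us (Term.cons d ds),
        [Atom.pqs i cs (Term.cons u us) ds, Atom.pq (Term.succ i) cs us ds])
  | c3 (i c u d : Term) :
      NQClause (Atom.pq i (Term.cons i c) (Term.cons i u) (Term.cons i d), [])
  | c4 (i cs us ds c u d : Term) :
      NQClause (Atom.pq i (Term.cons c cs) (Term.cons u us) (Term.cons d ds),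
        [Atom.pq i cs us ds])

/-- The program NQUEENS as a set of ground clauses. -/
def NQUEENS : Set (Atom × List Atom) := { cl | NQClause cl }

/-- The ground instances of the two clauses defining `pq`. -/
inductive PQClause : Atom × List Atom → Prop where
  | c3 (i c u d : Term) :
      PQClause (Atom.pq i (Term.cons i c) (Term.cons i u) (Term.cons i d), [])
  | c4 (i cs us ds c u d : Term) :
      PQClause (Atom.pq i (Term.cons c cs) (Term.cons u us) (Term.cons d ds),
        [Atom.pq i cs us ds])

/-- The program defining `pq`, as a set of ground clauses. -/
def PQprog : Set (Atom × List Atom) := { cl | PQClause cl }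

/-- The specification `S_pq`. -/
def SpecPq : Set Atom :=
  { a | ∃ (i cs us ds : Term) (k : ℕ), 1 ≤ k ∧ a = Atom.pq i cs us ds ∧
        NthMember k i cs ∧ NthMember k i us ∧ NthMember k i ds }

/-- The specification `S_pqs` (for correctness). -/
def SpecPqs : Set Atom :=
  { a | ∃ cs us ds : Term, a = Atom.pqs Term.zero cs us ds } ∪
  { a | ∃ (i : ℕ) (cs us t ds : Term), 1 ≤ i ∧
        a = Atom.pqs (numeral i) cs us (Term.cons t ds) ∧
        (∀ j : ℕ, 1 ≤ j → j ≤ i → IsMember (numeral j) cs) ∧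
        (DistinctList cs → CorrectUpTo i i cs us ds) }

/-- The specification `S = S_pq ∪ S_pqs` (for correctness). -/
def Spec : Set Atom := SpecPq ∪ SpecPqs

/-- The specification `S⁰` (for completeness). -/
def Spec0 : Set Atom :=
  SpecPq ∪ { a | ∃ cs us ds : Term, a = Atom.pqs Term.zero cs us ds } ∪
  { a | ∃ (i : ℕ) (cs us t ds : Term), 1 ≤ i ∧
        a = Atom.pqs (numeral i) cs us (Term.cons t ds) ∧
        CorrectUpTo i i cs us ds }

/-- The size function on terms. -/
def tsize : Term → ℕ
  | Term.zero => 0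
  | Term.nil => 0
  | Term.succ t => 1 + tsize t
  | Term.cons _ t => 1 + tsize t

/-- The level mapping on ground atoms. -/
def level : Atom → ℕ
  | Atom.pq _ cs _ _ => tsize cs
  | Atom.pqs i cs _ _ => tsize i + tsize cs

lemma nthMember_pos {k : ℕ} {e t : Term} (h : NthMember k e t) : 1 ≤ k := by
  induction h <;> omega

lemma nthMember_one {e t : Term} (h : NthMember 1 e t) :
    ∃ t', t = Term.cons e t' := by
  cases h with
  | head _ t' => exact ⟨t', rfl⟩
  | tail _ h => exact absurd (nthMember_pos h) (by omega)

lemma nthMember_cons {k : ℕ} {e t : Term} (h : NthMember k e t) :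
    ∃ a t', t = Term.cons a t' := by
  cases h with
  | head e t' => exact ⟨e, t', rfl⟩
  | tail a h => exact ⟨a, _, rfl⟩

lemma nthMember_tail_inv {k : ℕ} {e a t : Term}
    (h : NthMember (k + 1) e (Term.cons a t)) (hk : 1 ≤ k) : NthMember k e t := by
  cases h with
  | head => omega
  | tail _ h => exact h

/-- Every atom of `S⁰` is covered by NQUEENS w.r.t. `S⁰`. -/
theorem spec0_covered :
    ∀ a ∈ Spec0, ∃ B : List Atom, (a, B) ∈ NQUEENS ∧ ∀ b ∈ B, b ∈ Spec0 := by
  intro a ha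
  rcases ha with (hpq | hzero) | hpqs
  · -- pq case
    rcases hpq with ⟨i, cs, us, ds, k, hk, rfl, h1, h2, h3⟩
    match k, hk with
    | 1, _ =>
      rcases nthMember_one h1 with ⟨c, rfl⟩
      rcases nthMember_one h2 with ⟨u, rfl⟩
      rcases nthMember_one h3 with ⟨d, rfl⟩
      exact ⟨[], NQClause.c3 i c u d, by simp⟩
    | n + 2, _ =>
      rcases nthMember_cons h1 with ⟨c, cs', rfl⟩
      rcases nthMember_cons h2 with ⟨u, us', rfl⟩
      rcases nthMember_cons h3 with ⟨d, ds', rfl⟩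
      refine ⟨[Atom.pq i cs' us' ds'], NQClause.c4 i cs' us' ds' c u d, ?_⟩
      intro b hb
      simp only [List.mem_singleton] at hb
      subst hb
      left; left
      exact ⟨i, cs', us', ds', n + 1, by omega, rfl,
        nthMember_tail_inv h1 (by omega), nthMember_tail_inv h2 (by omega),
        nthMember_tail_inv h3 (by omega)⟩
  · rcases hzero with ⟨cs, us, ds, rfl⟩
    exact ⟨[], NQClause.c1 cs us ds, by simp⟩
  · -- pqs succ case
    rcases hpqs with ⟨i, cs, us, t, ds, hi, rfl, hcorr⟩
    obtain ⟨m, rfl⟩ : ∃ m, i = m + 1 := ⟨i - 1, by omega⟩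
    obtain ⟨hle, hdist, hmem, hup, hdown, hupr, hdownr⟩ := hcorr
    -- queen m+1 is in cs at position k
    obtain ⟨k, hk1, hkc⟩ := hmem (m + 1) (by omega) le_rfl
    have hkus : NthMember k (numeral (m + 1)) us :=
      hupr (m + 1) k k (by omega) le_rfl hkc (by push_cast; ring) (by omega)
    have hkds : NthMember k (numeral (m + 1)) ds :=
      hdownr (m + 1) k k (by omega) le_rfl hkc (by push_cast; ring) (by omega)
    have hpqmem : Atom.pq (Term.succ (numeral m)) cs us ds ∈ Spec0 := by
      left; left
      exact ⟨Term.succ (numeral m), cs, us, ds, k, hk1, rfl, hkc, hkus, hkds⟩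
    rcases Nat.eq_zero_or_pos m with hm | hm
    · subst hm
      refine ⟨[Atom.pqs (numeral 0) cs (Term.cons Term.zero us) ds,
        Atom.pq (Term.succ (numeral 0)) cs us ds],
        NQClause.c2 (numeral 0) cs us ds Term.zero t, ?_⟩
      intro b hb
      simp only [List.mem_cons, List.mem_singleton, List.not_mem_nil, or_false] at hb
      rcases hb with rfl | rfl
      · left; right
        exact ⟨cs, Term.cons Term.zero us, ds, rfl⟩
      · exact hpqmem
    · -- m ≥ 1
      rcases nthMember_cons hkds with ⟨t', ds', rfl⟩
      -- choose u
      by_cases hex : ∃ j k0 : ℕ, 1 ≤ j ∧ j ≤ m ∧ NthMember k0 (numeral j) cs ∧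
          (k0 : ℤ) + j = m + 1
      case pos =>
        obtain ⟨j0, k0, hj01, hj0m, hk0c, hk0e⟩ := hex
        refine ⟨[Atom.pqs (numeral m) cs (Term.cons (numeral j0) us) (Term.cons t' ds'),
          Atom.pq (Term.succ (numeral m)) cs us (Term.cons t' ds')],
          NQClause.c2 (numeral m) cs us (Term.cons t' ds') (numeral j0) t, ?_⟩
        intro b hb
        simp only [List.mem_cons, List.mem_singleton, List.not_mem_nil, or_false] at hb
        rcases hb with rfl | rfl
        · right
          refine ⟨m, cs, Term.cons (numeral j0) us, t', ds', hm, rfl,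
            le_rfl, hdist, fun j h1 h2 => hmem j h1 (by omega), ?_, ?_, ?_, ?_⟩
          · intro j j' p p' a1 a2 a3 a4 a5 b1 b2 heq
            exact hup j j' p p' a1 (by omega) a3 (by omega) a5 b1 b2 (by omega)
          · intro j j' p p' a1 a2 a3 a4 a5 b1 b2 heq
            exact hdown j j' p p' a1 (by omega) a3 (by omega) a5 b1 b2 (by omega)
          · intro j p l hj1 hjm hpc hl hlpos
            by_cases hcase : (p : ℤ) + j = m + 1
            · have hl1 : l = 1 := by omega
              subst hl1
              have hjj : j = j0 := by
                by_contra hne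
                exact hup j j0 p k0 hj1 (by omega) hj01 (by omega) hne hpc hk0c
                  (by omega)
              subst hjj
              exact NthMember.head _ _
            · have hl2 : 2 ≤ l := by omega
              have h0 : NthMember (l - 1) (numeral j) us :=
                hupr j p (l - 1) hj1 (by omega) hpc (by push_cast; omega) (by omega)
              have := NthMember.tail (e₁ := numeral j0) h0
              rwa [Nat.sub_add_cancel (by omega)] at this
          · intro j p l hj1 hjm hpc hl hlpos
            have h0 : NthMember (l + 1) (numeral j) (Term.cons t' ds') :=
              hdownr j p (l + 1) hj1 (by omega) hpc (by push_cast; omega) (by omega)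
            exact nthMember_tail_inv h0 hlpos
        · exact hpqmem
      case neg =>
        refine ⟨[Atom.pqs (numeral m) cs (Term.cons Term.zero us) (Term.cons t' ds'),
          Atom.pq (Term.succ (numeral m)) cs us (Term.cons t' ds')],
          NQClause.c2 (numeral m) cs us (Term.cons t' ds') Term.zero t, ?_⟩
        intro b hb
        simp only [List.mem_cons, List.mem_singleton, List.not_mem_nil, or_false] at hb
        rcases hb with rfl | rfl
        · right
          refine ⟨m, cs, Term.cons Term.zero us, t', ds', hm, rfl,
            le_rfl, hdist, fun j h1 h2 => hmem j h1 (by omega), ?_, ?_, ?_, ?_⟩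
          · intro j j' p p' a1 a2 a3 a4 a5 b1 b2 heq
            exact hup j j' p p' a1 (by omega) a3 (by omega) a5 b1 b2 (by omega)
          · intro j j' p p' a1 a2 a3 a4 a5 b1 b2 heq
            exact hdown j j' p p' a1 (by omega) a3 (by omega) a5 b1 b2 (by omega)
          · intro j p l hj1 hjm hpc hl hlpos
            by_cases hcase : (p : ℤ) + j = m + 1
            · exact absurd ⟨j, p, hj1, hjm, hpc, hcase⟩ hex
            · have hl2 : 2 ≤ l := by omega
              have h0 : NthMember (l - 1) (numeral j) us :=
                hupr j p (l - 1) hj1 (by omega) hpc (by push_cast; omega) (by omega)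
              have := NthMember.tail (e₁ := Term.zero) h0
              rwa [Nat.sub_add_cancel (by omega)] at this
          · intro j p l hj1 hjm hpc hl hlpos
            have h0 : NthMember (l + 1) (numeral j) (Term.cons t' ds') :=
              hdownr j p (l + 1) hj1 (by omega) hpc (by push_cast; omega) (by omega)
            exact nthMember_tail_inv h0 hlpos
        · exact hpqmem
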